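/- Let C > 0 and ρ ∈ (0,1). For each n ≥ 1, let P_n be a skew product on I×I over a Borel map f_n : I → I with (C,ρ)-contracting fibers, and let μ̄_n be an f_n-invariant Borel probability measure on I; likewise let P be a skew product over f with (C,ρ)-contracting fibers and μ̄ an f-invariant Borel probability measure. Let φ : I×I → ℝ be continuous, and assume all the functions (φ∘P_n^m)⁺ and (φ∘P^m)⁺ are Borel measurable. Suppose that for each fixed m ≥ 0, ∫ (φ∘P_n^m)⁺ dμ̄_n → ∫ (φ∘P^m)⁺ dμ̄ as n → ∞. Then for each n the limit L_n := lim_{m→∞} ∫ (φ∘P_n^m)⁺ dμ̄_n exists, the limit L := lim_{m→∞} ∫ (φ∘P^m)⁺ dμ̄ exists, and L_n → L as n → ∞. -/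

import Mathlib

/-!
Write `ψₘ(x) = sup_y φ(Pᵐ(x, y))`. Since `P` is a skew product over `f`, every point of the
fibre of `x` lands after `k` steps in the fibre of `fᵏ x`, so `ψₘ₊ₖ ≤ ψₘ ∘ fᵏ`; conversely, the
`m`-th iterate squeezes each fibre to diameter `Cρᵐ`, so `ψₘ ∘ fᵏ ≤ ψₘ₊ₖ + ω(Cρᵐ)`, where `ω` is
the modulus of continuity of `φ`. Integrating against an `f`-invariant probability measure,
`|∫ψₘ₊ₖ − ∫ψₘ| ≤ ω(Cρᵐ)` for all `k`, uniformly over all skew products with `(C,ρ)`-contracting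
fibres. Hence the sequences `m ↦ ∫ (φ∘Pₙᵐ)⁺ dμ̄ₙ` are Cauchy uniformly in `n`; their limit as
`n → ∞`, the sequence `m ↦ ∫ (φ∘Pᵐ)⁺ dμ̄`, is then Cauchy as well, and the Moore–Osgood theorem
interchanges the two limits.
-/

open MeasureTheory Set Filter Topology

noncomputable section

/-- The interval `I = [-1/2, 1/2] ⊆ ℝ`. -/
abbrev Iv : Set ℝ := Set.Icc (-(1 / 2)) (1 / 2)

instance : Nonempty Iv := ⟨⟨0, by norm_num⟩⟩

/-- The square `Σ = I × I`. -/
abbrev Sq : Type := Iv × Iv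

section MooreOsgood

variable {α β : Type*} [PseudoMetricSpace α]

lemma uniformCauchySeqOn_of_eventually_dist_add_le {F : ℕ → β → α}
    (hF : ∀ ε > 0, ∀ᶠ m in atTop, ∀ k b, dist (F (m + k) b) (F m b) ≤ ε) :
    UniformCauchySeqOn F atTop univ := by
  rw [Metric.uniformCauchySeqOn_iff]
  intro ε hε
  obtain ⟨N, hN⟩ := (hF (ε / 3) (by positivity)).exists_forall_of_atTop
  refine ⟨N, fun m hm n hn b _ => ?_⟩
  obtain ⟨k, rfl⟩ := Nat.exists_eq_add_of_le hm
  obtain ⟨l, rfl⟩ := Nat.exists_eq_add_of_le hn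
  calc dist (F (N + k) b) (F (N + l) b)
      ≤ dist (F (N + k) b) (F N b) + dist (F (N + l) b) (F N b) := dist_triangle_right _ _ _
    _ ≤ ε / 3 + ε / 3 := add_le_add (hN N le_rfl k b) (hN N le_rfl l b)
    _ < ε := by linarith

lemma UniformCauchySeqOn.cauchySeq_of_tendsto {F : ℕ → β → α} {l : Filter β} [l.NeBot]
    {v : ℕ → α} (hF : UniformCauchySeqOn F atTop univ) (hv : ∀ m, Tendsto (F m) l (𝓝 (v m))) :
    CauchySeq v := by
  rw [Metric.cauchySeq_iff]
  intro ε hε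
  obtain ⟨N, hN⟩ := Metric.uniformCauchySeqOn_iff.mp hF (ε / 2) (by positivity)
  refine ⟨N, fun m hm n hn => ?_⟩
  have hdist : dist (v m) (v n) ≤ ε / 2 :=
    le_of_tendsto ((hv m).dist (hv n))
      (Eventually.of_forall fun b => (hN m hm n hn b (mem_univ b)).le)
  linarith

theorem UniformCauchySeqOn.exists_tendsto_iteratedLimits [CompleteSpace α] {F : ℕ → β → α}
    {l : Filter β} [l.NeBot] {v : ℕ → α} (hF : UniformCauchySeqOn F atTop univ)
    (hv : ∀ m, Tendsto (F m) l (𝓝 (v m))) :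
    ∃ (w : β → α) (L : α), (∀ b, Tendsto (fun m => F m b) atTop (𝓝 (w b))) ∧
      Tendsto v atTop (𝓝 L) ∧ Tendsto w l (𝓝 L) := by
  choose w hw using fun b => cauchySeq_tendsto_of_complete (hF.cauchySeq (mem_univ b))
  obtain ⟨L, hL⟩ := cauchySeq_tendsto_of_complete (hF.cauchySeq_of_tendsto hv)
  have hFw : TendstoUniformly F w atTop :=
    tendstoUniformlyOn_univ.mp (hF.tendstoUniformlyOn_of_tendsto fun b _ => hw b)
  exact ⟨w, L, hw, hL, hFw.tendsto_of_eventually_tendsto (Eventually.of_forall hv) hL⟩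

end MooreOsgood

lemma UniformContinuous.eventually_le_add_of_dist_le {X : Type*} [PseudoMetricSpace X]
    {φ : X → ℝ} (hφ : UniformContinuous φ) {r : ℕ → ℝ} (hr : Tendsto r atTop (𝓝 0))
    {ε : ℝ} (hε : 0 < ε) : ∀ᶠ m in atTop, ∀ p q, dist p q ≤ r m → φ p ≤ φ q + ε := by
  obtain ⟨δ, hδ, hφδ⟩ := Metric.uniformContinuous_iff.mp hφ ε hε
  filter_upwards [hr.eventually (gt_mem_nhds hδ)] with m hm p q hpq
  have hpq' := (Real.dist_eq _ _ ▸ hφδ (hpq.trans_lt hm)).le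
  linarith [le_abs_self (φ p - φ q)]

section SkewProduct

open Function

variable {α β : Type*} {φ : α × β → ℝ} {P : α × β → α × β} {f : α → α}

/-- `fiberSup φ P m` is the function `(φ ∘ Pᵐ)⁺`. -/
def fiberSup (φ : α × β → ℝ) (P : α × β → α × β) (m : ℕ) (x : α) : ℝ :=
  ⨆ y, φ (P^[m] (x, y))

lemma bddAbove_range_fiber (hφ : BddAbove (range φ)) (m : ℕ) (x : α) :
    BddAbove (range fun y => φ (P^[m] (x, y))) :=
  hφ.mono (range_comp_subset_range _ φ)

lemma iterate_eq_fst_iterate (hP : Semiconj Prod.fst P f) (k : ℕ) (p : α × β) :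
    P^[k] p = (f^[k] p.1, (P^[k] p).2) :=
  Prod.ext ((hP.iterate_right k).eq p) rfl

variable [Nonempty β]

lemma fiberSup_add_le (hφ : BddAbove (range φ)) (hP : Semiconj Prod.fst P f) (m k : ℕ)
    (x : α) : fiberSup φ P (m + k) x ≤ fiberSup φ P m (f^[k] x) :=
  ciSup_le fun y => by
    rw [iterate_add_apply, iterate_eq_fst_iterate hP k]
    exact le_ciSup (bddAbove_range_fiber hφ m _) _

lemma fiberSup_le_add (hφ : BddAbove (range φ)) (hP : Semiconj Prod.fst P f) {m : ℕ}
    {ε : ℝ} (hosc : ∀ x y₁ y₂, φ (P^[m] (x, y₁)) ≤ φ (P^[m] (x, y₂)) + ε) (k : ℕ) (x : α) :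
    fiberSup φ P m (f^[k] x) ≤ fiberSup φ P (m + k) x + ε :=
  ciSup_le fun z => by
    let y₀ := Classical.arbitrary β
    refine (hosc _ z (P^[k] (x, y₀)).2).trans (add_le_add_left ?_ ε)
    have hfiber : (f^[k] x, (P^[k] (x, y₀)).2) = P^[k] (x, y₀) :=
      (iterate_eq_fst_iterate hP k (x, y₀)).symm
    rw [hfiber, ← iterate_add_apply]
    exact le_ciSup (bddAbove_range_fiber hφ (m + k) x) y₀

lemma abs_fiberSup_le {B : ℝ} (hB : ∀ p, |φ p| ≤ B) (m : ℕ) (x : α) :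
    |fiberSup φ P m x| ≤ B := by
  have hφ : BddAbove (range φ) := ⟨B, forall_mem_range.mpr fun p => (abs_le.mp (hB p)).2⟩
  refine abs_le.mpr ⟨?_, ciSup_le fun y => (abs_le.mp (hB _)).2⟩
  exact (abs_le.mp (hB _)).1.trans (le_ciSup (bddAbove_range_fiber hφ m x) (Classical.arbitrary β))

variable [MeasurableSpace α] {μ : Measure α}

lemma integrable_fiberSup [IsFiniteMeasure μ] {B : ℝ} (hB : ∀ p, |φ p| ≤ B) {m : ℕ}
    (hmeas : Measurable (fiberSup φ P m)) : Integrable (fiberSup φ P m) μ :=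
  .of_bound hmeas.aestronglyMeasurable B (ae_of_all _ fun x => abs_fiberSup_le hB m x)

lemma dist_integral_fiberSup_add_le [IsProbabilityMeasure μ] (hφ : BddAbove (range φ))
    (hP : Semiconj Prod.fst P f) (hf : MeasurePreserving f μ μ) {m : ℕ} {ε : ℝ}
    (hosc : ∀ x y₁ y₂, φ (P^[m] (x, y₁)) ≤ φ (P^[m] (x, y₂)) + ε) (k : ℕ)
    (hm : Integrable (fiberSup φ P m) μ) (hmk : Integrable (fiberSup φ P (m + k)) μ) :
    dist (∫ x, fiberSup φ P (m + k) x ∂μ) (∫ x, fiberSup φ P m x ∂μ) ≤ ε := by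
  have hfk := hf.iterate k
  have hcomp : Integrable (fun x => fiberSup φ P m (f^[k] x)) μ :=
    hfk.integrable_comp_of_integrable hm
  have hinv : ∫ x, fiberSup φ P m (f^[k] x) ∂μ = ∫ x, fiberSup φ P m x ∂μ := by
    have hmeas : AEStronglyMeasurable (fiberSup φ P m) (μ.map f^[k]) := by
      rw [hfk.map_eq]; exact hm.aestronglyMeasurable
    rw [← integral_map hfk.aemeasurable hmeas, hfk.map_eq]
  have hle : ∫ x, fiberSup φ P (m + k) x ∂μ ≤ ∫ x, fiberSup φ P m x ∂μ :=
    hinv ▸ integral_mono hmk hcomp (fiberSup_add_le hφ hP m k)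
  have hge : ∫ x, fiberSup φ P m x ∂μ ≤ ∫ x, fiberSup φ P (m + k) x ∂μ + ε := by
    calc ∫ x, fiberSup φ P m x ∂μ = ∫ x, fiberSup φ P m (f^[k] x) ∂μ := hinv.symm
      _ ≤ ∫ x, (fiberSup φ P (m + k) x + ε) ∂μ :=
          integral_mono hcomp (hmk.add (integrable_const ε)) (fiberSup_le_add hφ hP hosc k)
      _ = ∫ x, fiberSup φ P (m + k) x ∂μ + ε := by
          rw [integral_add hmk (integrable_const ε), integral_const, probReal_univ, one_smul]
  rw [Real.dist_eq, abs_sub_le_iff]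
  constructor <;> linarith

end SkewProduct

theorem limits_interchange_sup_integrals_general
    (C ρ : ℝ) (hρ₀ : 0 < ρ) (hρ₁ : ρ < 1)
    (fn : ℕ → Iv → Iv) (gn : ℕ → Sq → Iv) (Pn : ℕ → Sq → Sq)
    (hfnmeas : ∀ n, Measurable (fn n))
    (hskewn : ∀ n (p : Sq), Pn n p = (fn n p.1, gn n p))
    (hcontrn : ∀ n (x y₁ y₂ : Iv) (m : ℕ), 1 ≤ m →
      dist ((Pn n)^[m] (x, y₁)) ((Pn n)^[m] (x, y₂)) ≤ C * ρ ^ m)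
    (μn : ℕ → Measure Iv) (hμnprob : ∀ n, IsProbabilityMeasure (μn n))
    (hμninv : ∀ n, Measure.map (fn n) (μn n) = μn n)
    (P : Sq → Sq)
    (μ : Measure Iv)
    (φ : Sq → ℝ) (hφ : Continuous φ)
    (hmsupn : ∀ n (m : ℕ), Measurable fun x : Iv => ⨆ y : Iv, φ ((Pn n)^[m] (x, y)))
    (hconv : ∀ m : ℕ,
      Tendsto (fun n : ℕ => ∫ x, (⨆ y : Iv, φ ((Pn n)^[m] (x, y))) ∂μn n) atTop
        (nhds (∫ x, (⨆ y : Iv, φ (P^[m] (x, y))) ∂μ))) :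
    ∃ (Ln : ℕ → ℝ) (L : ℝ),
      (∀ n, Tendsto (fun m : ℕ => ∫ x, (⨆ y : Iv, φ ((Pn n)^[m] (x, y))) ∂μn n) atTop
        (nhds (Ln n))) ∧
      Tendsto (fun m : ℕ => ∫ x, (⨆ y : Iv, φ (P^[m] (x, y))) ∂μ) atTop (nhds L) ∧
      Tendsto Ln atTop (nhds L) := by
  have hbdd : BddAbove (range φ) := (isCompact_range hφ).bddAbove
  obtain ⟨B, hB⟩ : ∃ B, ∀ p, |φ p| ≤ B :=
    ((isCompact_range hφ).isBounded.exists_norm_le).imp fun B hB p => hB _ (mem_range_self p)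
  have hCρ : Tendsto (fun m : ℕ => C * ρ ^ m) atTop (𝓝 0) := by
    simpa using (tendsto_pow_atTop_nhds_zero_of_lt_one hρ₀.le hρ₁).const_mul C
  have hosc := fun ε (hε : 0 < ε) =>
    (CompactSpace.uniformContinuous_of_continuous hφ).eventually_le_add_of_dist_le hCρ hε
  have hcauchy : UniformCauchySeqOn
      (fun m n => ∫ x, (⨆ y : Iv, φ ((Pn n)^[m] (x, y))) ∂μn n) atTop univ := by
    refine uniformCauchySeqOn_of_eventually_dist_add_le fun ε hε => ?_
    filter_upwards [hosc ε hε, eventually_ge_atTop 1] with m hm hm₁ k n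
    have hint := fun m => integrable_fiberSup (μ := μn n) hB (hmsupn n m)
    exact dist_integral_fiberSup_add_le hbdd (fun p => congrArg Prod.fst (hskewn n p))
      ⟨hfnmeas n, hμninv n⟩ (fun x y₁ y₂ => hm _ _ (hcontrn n x y₁ y₂ m hm₁)) k (hint m) (hint _)
  exact hcauchy.exists_tendsto_iteratedLimits hconv

/-- Interchange of limits: for skew products `P_n` (over `f_n`, with
`f_n`-invariant measures `μ̄_n`) and `P` (over `f`, with `μ̄`), all with `(C,ρ)`-contracting
fibers, if for each fixed `m` one has `∫ (φ∘P_n^m)⁺ dμ̄_n → ∫ (φ∘P^m)⁺ dμ̄` as `n → ∞`, then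
the limits `L_n = lim_m ∫ (φ∘P_n^m)⁺ dμ̄_n` and `L = lim_m ∫ (φ∘P^m)⁺ dμ̄` exist and
`L_n → L`. -/
theorem limits_interchange_sup_integrals
    (C ρ : ℝ) (hC : 0 < C) (hρ₀ : 0 < ρ) (hρ₁ : ρ < 1)
    (fn : ℕ → Iv → Iv) (gn : ℕ → Sq → Iv) (Pn : ℕ → Sq → Sq)
    (hfnmeas : ∀ n, Measurable (fn n)) (hgnmeas : ∀ n, Measurable (gn n))
    (hPnmeas : ∀ n, Measurable (Pn n))
    (hskewn : ∀ n (p : Sq), Pn n p = (fn n p.1, gn n p))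
    (hcontrn : ∀ n (x y₁ y₂ : Iv) (m : ℕ), 1 ≤ m →
      dist ((Pn n)^[m] (x, y₁)) ((Pn n)^[m] (x, y₂)) ≤ C * ρ ^ m)
    (μn : ℕ → Measure Iv) (hμnprob : ∀ n, IsProbabilityMeasure (μn n))
    (hμninv : ∀ n, Measure.map (fn n) (μn n) = μn n)
    (f : Iv → Iv) (g : Sq → Iv) (P : Sq → Sq)
    (hfmeas : Measurable f) (hgmeas : Measurable g) (hPmeas : Measurable P)
    (hskew : ∀ p : Sq, P p = (f p.1, g p))
    (hcontr : ∀ (x y₁ y₂ : Iv) (m : ℕ), 1 ≤ m →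
      dist (P^[m] (x, y₁)) (P^[m] (x, y₂)) ≤ C * ρ ^ m)
    (μ : Measure Iv) [IsProbabilityMeasure μ] (hinv : Measure.map f μ = μ)
    (φ : Sq → ℝ) (hφ : Continuous φ)
    (hmsupn : ∀ n (m : ℕ), Measurable fun x : Iv => ⨆ y : Iv, φ ((Pn n)^[m] (x, y)))
    (hmsup : ∀ m : ℕ, Measurable fun x : Iv => ⨆ y : Iv, φ (P^[m] (x, y)))
    (hconv : ∀ m : ℕ,
      Tendsto (fun n : ℕ => ∫ x, (⨆ y : Iv, φ ((Pn n)^[m] (x, y))) ∂μn n) atTop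
        (nhds (∫ x, (⨆ y : Iv, φ (P^[m] (x, y))) ∂μ))) :
    ∃ (Ln : ℕ → ℝ) (L : ℝ),
      (∀ n, Tendsto (fun m : ℕ => ∫ x, (⨆ y : Iv, φ ((Pn n)^[m] (x, y))) ∂μn n) atTop
        (nhds (Ln n))) ∧
      Tendsto (fun m : ℕ => ∫ x, (⨆ y : Iv, φ (P^[m] (x, y))) ∂μ) atTop (nhds L) ∧
      Tendsto Ln atTop (nhds L) :=
  limits_interchange_sup_integrals_general C ρ hρ₀ hρ₁ fn gn Pn hfnmeas hskewn hcontrn μn hμnprob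
    hμninv P μ φ hφ hmsupn hconv
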